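/- arXiv:0706.3476 — 7 statements merged into one kernel-verified Lean document; each statement's English description precedes it below -/
import Mathlib

section
/- Let γ, λ be complex numbers with Im(γ − λ) < 0. Then for every real y, ∫_{-∞}^{∞} exp(i·γ·(y − x) − e^{y−x}) · exp(i·λ·x) dx = Γ(i·(γ − λ)) · exp(i·λ·y). -/
open MeasureTheory Complex

lemma gl1_aux_gamma (s : ℂ) (hs : 0 < s.re) :
    ∫ u : ℝ, Complex.exp (s * (u : ℂ) - Real.exp u) = Complex.Gamma s := by
  rw [Complex.Gamma_eq_integral hs, Complex.GammaIntegral]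
  have himg : Real.exp '' Set.univ = Set.Ioi (0 : ℝ) := by
    rw [Set.image_univ, Real.range_exp]
  have hderiv : ∀ x ∈ (Set.univ : Set ℝ),
      HasDerivWithinAt Real.exp (Real.exp x) Set.univ x :=
    fun x _ => (Real.hasDerivAt_exp x).hasDerivWithinAt
  have key := integral_image_eq_integral_abs_deriv_smul (MeasurableSet.univ)
    hderiv Real.exp_injective.injOn
    (fun t : ℝ => (Real.exp (-t) : ℂ) * (t : ℂ) ^ (s - 1))
  rw [himg, Measure.restrict_univ] at key
  rw [key]
  congr 1
  ext u
  have h1 : ((Real.exp u : ℝ) : ℂ) ^ (s - 1) = Complex.exp ((u : ℂ) * (s - 1)) := by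
    rw [Complex.cpow_def_of_ne_zero (by exact_mod_cast (Real.exp_pos u).ne'),
      ← Complex.ofReal_log (Real.exp_pos u).le, Real.log_exp]
  rw [h1, abs_of_pos (Real.exp_pos u), real_smul, Complex.ofReal_exp,
    Complex.ofReal_exp, ← Complex.exp_add, ← Complex.exp_add]
  push_cast
  congr 1
  ring

/-- Eigenvalue property of the `gl₁` Baxter Q-operator: for `Im(γ − λ) < 0`,
`∫ℝ exp(iγ(y−x) − e^{y−x}) e^{iλx} dx = Γ(i(γ−λ)) e^{iλy}`. -/
theorem gl1_baxter_eigenvalue (γ lam : ℂ) (h : (γ - lam).im < 0) (y : ℝ) :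
    ∫ x : ℝ, Complex.exp (I * γ * ((y : ℂ) - (x : ℂ)) - Real.exp (y - x)) *
        Complex.exp (I * lam * (x : ℂ)) =
      Complex.Gamma (I * (γ - lam)) * Complex.exp (I * lam * (y : ℂ)) := by
  have hs : 0 < (I * (γ - lam)).re := by
    rw [Complex.sub_im] at h
    simp [Complex.mul_re, Complex.sub_im]
    linarith
  have step1 : ∀ x : ℝ,
      Complex.exp (I * γ * ((y : ℂ) - (x : ℂ)) - Real.exp (y - x)) *
        Complex.exp (I * lam * (x : ℂ)) =
      Complex.exp (I * (γ - lam) * ((y : ℂ) - (x : ℂ)) - Real.exp (y - x)) *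
        Complex.exp (I * lam * (y : ℂ)) := by
    intro x
    rw [← Complex.exp_add, ← Complex.exp_add]
    congr 1
    ring
  calc ∫ x : ℝ, Complex.exp (I * γ * ((y : ℂ) - (x : ℂ)) - Real.exp (y - x)) *
        Complex.exp (I * lam * (x : ℂ))
      = ∫ x : ℝ, Complex.exp (I * (γ - lam) * ((y : ℂ) - (x : ℂ)) - Real.exp (y - x)) *
        Complex.exp (I * lam * (y : ℂ)) := by simp_rw [step1]
    _ = (∫ x : ℝ, Complex.exp (I * (γ - lam) * ((y : ℂ) - (x : ℂ)) - Real.exp (y - x))) *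
        Complex.exp (I * lam * (y : ℂ)) := integral_mul_const _ _
    _ = (∫ u : ℝ, Complex.exp (I * (γ - lam) * (u : ℂ) - Real.exp u)) *
        Complex.exp (I * lam * (y : ℂ)) := by
        congr 1
        have := integral_sub_left_eq_self
          (fun u : ℝ => Complex.exp (I * (γ - lam) * (u : ℂ) - Real.exp u))
          (volume : Measure ℝ) y
        rw [← this]
        simp [Complex.ofReal_sub]
    _ = Complex.Gamma (I * (γ - lam)) * Complex.exp (I * lam * (y : ℂ)) := by
        rw [gl1_aux_gamma _ hs]
end

section
/- Define, for λ ∈ ℝ and x = (x₁,x₂), y = (y₁,y₂) ∈ ℝ², the kernel Q(x,y|λ) = exp( i·λ·((x₁−y₁)+(x₂−y₂)) − e^{x₁−y₁} − e^{y₁−x₂} − e^{x₂−y₂} ). Then for all real λ, λ' and all y, z ∈ ℝ², ∫_{ℝ²} Q(y,x|λ)·Q(x,z|λ') dx₁ dx₂ = ∫_{ℝ²} Q(y,x|λ')·Q(x,z|λ) dx₁ dx₂. -/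
open MeasureTheory Complex

/-- The kernel of the `gl₂` Baxter Q-operator. -/
noncomputable def Qgl2 (x y : ℝ × ℝ) (lam : ℝ) : ℂ :=
  Complex.exp (I * (lam : ℂ) * (((x.1 : ℂ) - (y.1 : ℂ)) + ((x.2 : ℂ) - (y.2 : ℂ)))
    - Real.exp (x.1 - y.1) - Real.exp (y.1 - x.2) - Real.exp (x.2 - y.2))

/-- Key pointwise exponent identity for the reflection change of variables. -/
lemma gl2_key (c l l' u v y1 y2 z1 z2 a b : ℂ)
    (hA : Complex.exp (y1 - a) = Complex.exp (-y2) + Complex.exp (-z1))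
    (hB : Complex.exp (b - z2) = Complex.exp y2 + Complex.exp z1)
    (hab : a + b = y1 + y2 + z1 + z2) :
    c * l * ((y1 - (a - u)) + (y2 - (b - v))) - Complex.exp (y1 - (a - u))
      - Complex.exp ((a - u) - y2) - Complex.exp (y2 - (b - v))
    + (c * l' * (((a - u) - z1) + ((b - v) - z2)) - Complex.exp ((a - u) - z1)
      - Complex.exp (z1 - (b - v)) - Complex.exp ((b - v) - z2))
    = c * l' * ((y1 - u) + (y2 - v)) - Complex.exp (y1 - u)
      - Complex.exp (u - y2) - Complex.exp (y2 - v)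
    + (c * l * ((u - z1) + (v - z2)) - Complex.exp (u - z1)
      - Complex.exp (z1 - v) - Complex.exp (v - z2)) := by
  have h1 : Complex.exp (y1 - (a - u)) = Complex.exp (u - y2) + Complex.exp (u - z1) := by
    have := congrArg (· * Complex.exp u) hA
    simp only [add_mul, ← Complex.exp_add] at this
    rw [show y1 - (a - u) = y1 - a + u by ring, this, show -y2 + u = u - y2 by ring,
      show -z1 + u = u - z1 by ring]
  have h2 : Complex.exp ((a - u) - y2) + Complex.exp ((a - u) - z1) = Complex.exp (y1 - u) := by
    have := congrArg (· * Complex.exp (a - u)) hA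
    simp only [add_mul, ← Complex.exp_add] at this
    rw [show (a-u) - y2 = -y2 + (a-u) by ring, show (a-u) - z1 = -z1 + (a-u) by ring, ← this,
      show y1 - a + (a - u) = y1 - u by ring]
  have h3 : Complex.exp (y2 - (b - v)) + Complex.exp (z1 - (b - v)) = Complex.exp (v - z2) := by
    have := congrArg (· * Complex.exp (v - b)) hB
    simp only [add_mul, ← Complex.exp_add] at this
    rw [show y2 - (b - v) = y2 + (v - b) by ring, show z1 - (b - v) = z1 + (v - b) by ring,
      ← this, show b - z2 + (v - b) = v - z2 by ring]
  have h4 : Complex.exp ((b - v) - z2) = Complex.exp (y2 - v) + Complex.exp (z1 - v) := by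
    have := congrArg (· * Complex.exp (-v)) hB
    simp only [add_mul, ← Complex.exp_add] at this
    rw [show (b - v) - z2 = b - z2 + -v by ring, this, show y2 + -v = y2 - v by ring,
      show z1 + -v = z1 - v by ring]
  rw [h1, h4, ← h2, ← h3]
  linear_combination c * (l' - l) * hab

/-- Commutativity `Q^{gl₂}(λ)·Q^{gl₂}(λ') = Q^{gl₂}(λ')·Q^{gl₂}(λ)` of the `gl₂`
Baxter Q-operators. -/
theorem gl2_baxter_commute (lam lam' : ℝ) (y z : ℝ × ℝ) :
    ∫ x : ℝ × ℝ, Qgl2 y x lam * Qgl2 x z lam' =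
      ∫ x : ℝ × ℝ, Qgl2 y x lam' * Qgl2 x z lam := by
  set A : ℝ := Real.exp (-y.2) + Real.exp (-z.1) with hAdef
  set B : ℝ := Real.exp y.2 + Real.exp z.1 with hBdef
  have hApos : 0 < A := by positivity
  have hBpos : 0 < B := by positivity
  set a : ℝ := y.1 - Real.log A with hadef
  set b : ℝ := z.2 + Real.log B with hbdef
  have hA : Real.exp (y.1 - a) = A := by
    rw [hadef, show y.1 - (y.1 - Real.log A) = Real.log A by ring, Real.exp_log hApos]
  have hB : Real.exp (b - z.2) = B := by
    rw [hbdef, show z.2 + Real.log B - z.2 = Real.log B by ring, Real.exp_log hBpos]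
  have hBA : B = Real.exp (y.2 + z.1) * A := by
    rw [hAdef, hBdef, mul_add, ← Real.exp_add, ← Real.exp_add]
    ring_nf
  have hab : a + b = y.1 + y.2 + z.1 + z.2 := by
    have hlog : Real.log B = y.2 + z.1 + Real.log A := by
      rw [hBA, Real.log_mul (Real.exp_ne_zero _) (ne_of_gt hApos), Real.log_exp]
    rw [hadef, hbdef, hlog]; ring
  have hpt : ∀ x : ℝ × ℝ, Qgl2 y x lam * Qgl2 x z lam' =
      Qgl2 y (((a, b) : ℝ × ℝ) - x) lam' * Qgl2 (((a, b) : ℝ × ℝ) - x) z lam := by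
    intro x
    have hA' : Complex.exp ((y.1 : ℂ) - (a : ℂ)) =
        Complex.exp (-(y.2 : ℂ)) + Complex.exp (-(z.1 : ℂ)) := by
      have := congrArg (Complex.ofReal) hA
      push_cast [Complex.ofReal_exp] at this
      rw [this, hAdef]; push_cast [Complex.ofReal_exp]; ring
    have hB' : Complex.exp ((b : ℂ) - (z.2 : ℂ)) =
        Complex.exp ((y.2 : ℂ)) + Complex.exp ((z.1 : ℂ)) := by
      have := congrArg (Complex.ofReal) hB
      push_cast [Complex.ofReal_exp] at this
      rw [this, hBdef]; push_cast [Complex.ofReal_exp]; ring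
    have hab' : (a : ℂ) + (b : ℂ) = (y.1 : ℂ) + (y.2 : ℂ) + (z.1 : ℂ) + (z.2 : ℂ) := by
      exact_mod_cast congrArg Complex.ofReal hab
    simp only [Qgl2, Prod.fst_sub, Prod.snd_sub, ← Complex.exp_add]
    congr 1
    push_cast [Complex.ofReal_exp]
    exact (gl2_key I lam' lam x.1 x.2 y.1 y.2 z.1 z.2 a b hA' hB' hab').symm
  simp only [hpt]
  exact integral_sub_left_eq_self (fun x => Qgl2 y x lam' * Qgl2 x z lam) volume ((a, b) : ℝ × ℝ)
end

section
/- Fix real λ₁, λ₂ and define F : ℝ² → ℂ by F(x₁,x₂) = ∫_{-∞}^{∞} exp( i·λ₁·t + i·λ₂·(x₁ + x₂ − t) − e^{x₁ − t} − e^{t − x₂} ) dt. Then F satisfies the gl₂ quantum Toda equation: −(1/2)·(∂²F/∂x₁² + ∂²F/∂x₂²) + e^{x₁ − x₂}·F = (1/2)·(λ₁² + λ₂²)·F, for all (x₁,x₂) ∈ ℝ². -/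
open MeasureTheory Complex

/-!
Write `φ` for the integrand, `a = e^{x₁-t}` and `b = e^{t-x₂}`, so that `ab = e^{x₁-x₂}`.
Differentiating under the integral sign, `∂²_{x₁}φ = ((iλ₂ - a)² - a) φ` and
`∂²_{x₂}φ = ((iλ₂ + b)² - b) φ`, and a direct computation shows that
`(-(∂²_{x₁} + ∂²_{x₂}) + 2e^{x₁-x₂} - (λ₁² + λ₂²)) φ = ∂_t ((iλ₁ + iλ₂ - a + b) φ)`
is the `t`-derivative of a flux. Since `|φ| = exp(-(a + b))` decays doubly exponentially in `t`,
its integral vanishes. All differentiations are dominated by `C e^{-|t|/2}`, uniformly for `x` in a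
bounded set, because `a + b ≥ |t| - max(|x₁|, |x₂|)`.
-/

theorem integrable_exp_neg_mul_abs {b : ℝ} (hb : 0 < b) :
    Integrable fun t : ℝ => Real.exp (-b * |t|) := by
  rw [← integrableOn_univ, ← Set.Iic_union_Ioi (a := (0 : ℝ)), integrableOn_union]
  refine ⟨(integrableOn_exp_mul_Iic hb 0).congr_fun (fun t ht => ?_) measurableSet_Iic,
    (integrableOn_exp_mul_Ioi (neg_neg_of_pos hb) 0).congr_fun (fun t ht => ?_) measurableSet_Ioi⟩
  · rw [abs_of_nonpos ht, mul_neg, neg_mul, neg_neg]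
  · rw [abs_of_pos ht]

theorem hasDerivAt_integral_of_le_exp_neg_abs {E : Type*} [NormedAddCommGroup E]
    [NormedSpace ℝ E] {F F' : ℝ → ℝ → E} {x₀ K b : ℝ} (hb : 0 < b)
    (hF : ∀ x, Continuous (F x)) (hF' : Continuous (F' x₀)) (hF₀ : Integrable (F x₀))
    (hF'_le : ∀ x ∈ Metric.ball x₀ 1, ∀ t, ‖F' x t‖ ≤ K * Real.exp (-b * |t|))
    (hF'_deriv : ∀ x t, HasDerivAt (F · t) (F' x t) x) :
    Integrable (F' x₀) ∧ HasDerivAt (fun x => ∫ t, F x t) (∫ t, F' x₀ t) x₀ :=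
  hasDerivAt_integral_of_dominated_loc_of_deriv_le (Metric.ball_mem_nhds x₀ one_pos)
    (.of_forall fun x => (hF x).aestronglyMeasurable) hF₀ hF'.aestronglyMeasurable
    (.of_forall fun t x hx => hF'_le x hx t) ((integrable_exp_neg_mul_abs hb).const_mul K)
    (.of_forall fun t x _ => hF'_deriv x t)

lemma sq_mul_exp_neg_le {B s : ℝ} (hB : 0 ≤ B) (hs : 0 ≤ s) :
    (1 + B + s) ^ 2 * Real.exp (-s) ≤ 16 * (1 + B) ^ 2 * Real.exp (-(1 / 2) * s) := by
  have hlin : 1 + B + s ≤ (1 + B) * (4 * Real.exp (s / 4)) := by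
    nlinarith [Real.add_one_le_exp (s / 4)]
  have hsq : (1 + B + s) ^ 2 ≤ 16 * (1 + B) ^ 2 * Real.exp (s / 2) := by
    calc (1 + B + s) ^ 2 ≤ ((1 + B) * (4 * Real.exp (s / 4))) ^ 2 := by gcongr
      _ = 16 * (1 + B) ^ 2 * Real.exp (s / 2) := by
        rw [mul_pow, mul_pow, ← Real.exp_nat_mul]; ring_nf
  calc (1 + B + s) ^ 2 * Real.exp (-s) ≤ 16 * (1 + B) ^ 2 * Real.exp (s / 2) * Real.exp (-s) := by
        gcongr
    _ = 16 * (1 + B) ^ 2 * Real.exp (-(1 / 2) * s) := by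
        rw [mul_assoc, ← Real.exp_add]; ring_nf

lemma abs_sub_le_exp_sub_add_exp_sub {m x₁ x₂ : ℝ} (h₁ : |x₁| ≤ m) (h₂ : |x₂| ≤ m) (t : ℝ) :
    |t| - m ≤ Real.exp (x₁ - t) + Real.exp (t - x₂) := by
  have := Real.add_one_le_exp (x₁ - t)
  have := Real.add_one_le_exp (t - x₂)
  have := Real.exp_pos (x₁ - t)
  have := Real.exp_pos (t - x₂)
  cases abs_cases t <;> cases abs_le.mp h₁ <;> cases abs_le.mp h₂ <;> linarith

lemma hasDerivAt_ofReal (y : ℝ) : HasDerivAt (fun y : ℝ => (y : ℂ)) 1 y :=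
  (hasDerivAt_id y).ofReal_comp

lemma hasDerivAt_ofReal_exp_sub_const (c y : ℝ) :
    HasDerivAt (fun y : ℝ => (Real.exp (y - c) : ℂ)) (Real.exp (y - c)) y := by
  simpa using (((hasDerivAt_id y).sub_const c).exp).ofReal_comp

lemma hasDerivAt_ofReal_exp_const_sub (c y : ℝ) :
    HasDerivAt (fun y : ℝ => (Real.exp (c - y) : ℂ)) (-Real.exp (c - y)) y := by
  simpa using (((hasDerivAt_id y).const_sub c).exp).ofReal_comp

lemma norm_le_one_add_sq {w : ℂ} {B s : ℝ} (hw : ‖w‖ ≤ B + s) :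
    ‖w‖ ≤ (1 + B + s) ^ 2 := by
  nlinarith [norm_nonneg w]

lemma norm_sq_sub_ofReal_le {w : ℂ} {B s r : ℝ} (hB : 0 ≤ B) (hw : ‖w‖ ≤ B + s) (hr : 0 ≤ r)
    (hrs : r ≤ s) : ‖w ^ 2 - r‖ ≤ (1 + B + s) ^ 2 := by
  have hw' : ‖w‖ ^ 2 ≤ (B + s) ^ 2 := pow_le_pow_left₀ (norm_nonneg w) hw 2
  calc ‖w ^ 2 - r‖ ≤ ‖w‖ ^ 2 + r :=
        (norm_sub_le _ _).trans_eq (by rw [norm_pow, norm_real, Real.norm_of_nonneg hr])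
    _ ≤ (1 + B + s) ^ 2 := by nlinarith

namespace Whittaker

variable (l₁ l₂ : ℝ)

noncomputable def integrand (x₁ x₂ t : ℝ) : ℂ :=
  cexp (I * l₁ * t + I * l₂ * (x₁ + x₂ - t) - Real.exp (x₁ - t) - Real.exp (t - x₂))

@[fun_prop]
lemma continuous_integrand (x₁ x₂ : ℝ) : Continuous (integrand l₁ l₂ x₁ x₂) := by
  unfold integrand; fun_prop

lemma norm_integrand (x₁ x₂ t : ℝ) :
    ‖integrand l₁ l₂ x₁ x₂ t‖ = Real.exp (-(Real.exp (x₁ - t) + Real.exp (t - x₂))) := by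
  rw [integrand, norm_exp]
  congr 1
  simp only [sub_re, add_re, mul_re, mul_im, add_im, sub_im, I_re, I_im, ofReal_re, ofReal_im]
  ring

lemma hasDerivAt_integrand_fst (x₁ x₂ t : ℝ) :
    HasDerivAt (integrand l₁ l₂ · x₂ t)
      ((I * l₂ - Real.exp (x₁ - t)) * integrand l₁ l₂ x₁ x₂ t) x₁ := by
  have h := (((((hasDerivAt_ofReal x₁).add_const (x₂ : ℂ)).sub_const (t : ℂ)).const_mul (I * l₂)
    |>.const_add (I * l₁ * t)).sub (hasDerivAt_ofReal_exp_sub_const t x₁)).sub_const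
    (Real.exp (t - x₂) : ℂ) |>.cexp
  exact h.congr_deriv (by rw [mul_one, mul_comm]; rfl)

lemma hasDerivAt_integrand_snd (x₁ x₂ t : ℝ) :
    HasDerivAt (integrand l₁ l₂ x₁ · t)
      ((I * l₂ + Real.exp (t - x₂)) * integrand l₁ l₂ x₁ x₂ t) x₂ := by
  have h := (((((hasDerivAt_ofReal x₂).const_add (x₁ : ℂ)).sub_const (t : ℂ)).const_mul (I * l₂)
    |>.const_add (I * l₁ * t)).sub_const (Real.exp (x₁ - t) : ℂ)).sub
    (hasDerivAt_ofReal_exp_const_sub t x₂) |>.cexp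
  exact h.congr_deriv (by rw [mul_one, sub_neg_eq_add, mul_comm]; rfl)

lemma hasDerivAt_integrand (x₁ x₂ t : ℝ) :
    HasDerivAt (integrand l₁ l₂ x₁ x₂)
      ((I * l₁ - I * l₂ + Real.exp (x₁ - t) - Real.exp (t - x₂)) * integrand l₁ l₂ x₁ x₂ t) t := by
  have h := ((((hasDerivAt_ofReal t).const_mul (I * l₁)).add
    (((hasDerivAt_ofReal t).const_sub (x₁ + x₂ : ℂ)).const_mul (I * l₂))).sub
    (hasDerivAt_ofReal_exp_const_sub x₁ t)).sub (hasDerivAt_ofReal_exp_sub_const x₂ t) |>.cexp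
  exact h.congr_deriv (by rw [mul_comm]; congr 1; ring)

lemma norm_mul_integrand_le {B m x₁ x₂ : ℝ} (hB : 0 ≤ B) (h₁ : |x₁| ≤ m) (h₂ : |x₂| ≤ m) (t : ℝ)
    {q : ℂ} (hq : ‖q‖ ≤ (1 + B + (Real.exp (x₁ - t) + Real.exp (t - x₂))) ^ 2) :
    ‖q * integrand l₁ l₂ x₁ x₂ t‖ ≤
      16 * (1 + B) ^ 2 * Real.exp (1 / 2 * m) * Real.exp (-(1 / 2) * |t|) := by
  set s := Real.exp (x₁ - t) + Real.exp (t - x₂)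
  have hs : 0 ≤ s := by positivity
  have hts : |t| - m ≤ s := abs_sub_le_exp_sub_add_exp_sub h₁ h₂ t
  calc ‖q * integrand l₁ l₂ x₁ x₂ t‖ ≤ (1 + B + s) ^ 2 * Real.exp (-s) := by
        rw [norm_mul, norm_integrand]; gcongr
    _ ≤ 16 * (1 + B) ^ 2 * Real.exp (-(1 / 2) * s) := sq_mul_exp_neg_le hB hs
    _ ≤ 16 * (1 + B) ^ 2 * Real.exp (1 / 2 * m + -(1 / 2) * |t|) := by gcongr; linarith
    _ = _ := by rw [Real.exp_add, mul_assoc _ (Real.exp _)]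

lemma integrable_mul_integrand {B : ℝ} (hB : 0 ≤ B) (x₁ x₂ : ℝ) {q : ℝ → ℂ} (hq : Continuous q)
    (hq_le : ∀ t, ‖q t‖ ≤ (1 + B + (Real.exp (x₁ - t) + Real.exp (t - x₂))) ^ 2) :
    Integrable fun t => q t * integrand l₁ l₂ x₁ x₂ t :=
  ((integrable_exp_neg_mul_abs one_half_pos).const_mul _).mono'
    (by fun_prop) (.of_forall fun t =>
      norm_mul_integrand_le l₁ l₂ hB (le_max_left |x₁| |x₂|) (le_max_right _ _) t (hq_le t))

lemma integrable_integrand (x₁ x₂ : ℝ) : Integrable (integrand l₁ l₂ x₁ x₂) := by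
  simpa only [one_mul] using integrable_mul_integrand l₁ l₂ zero_le_one x₁ x₂
    (q := fun _ => 1) continuous_const fun t => norm_le_one_add_sq (by simp; positivity)

lemma norm_coeff_fst_le (x₁ x₂ t : ℝ) :
    ‖I * l₂ - Real.exp (x₁ - t)‖ ≤ |l₂| + (Real.exp (x₁ - t) + Real.exp (t - x₂)) := by
  refine (norm_sub_le _ _).trans ?_
  simp only [norm_mul, norm_I, one_mul, norm_real, Real.norm_eq_abs, Real.abs_exp]
  linarith [Real.exp_pos (t - x₂)]

lemma norm_coeff_snd_le (x₁ x₂ t : ℝ) :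
    ‖I * l₂ + Real.exp (t - x₂)‖ ≤ |l₂| + (Real.exp (x₁ - t) + Real.exp (t - x₂)) := by
  refine (norm_add_le _ _).trans ?_
  simp only [norm_mul, norm_I, one_mul, norm_real, Real.norm_eq_abs, Real.abs_exp]
  linarith [Real.exp_pos (x₁ - t)]

lemma norm_flux_coeff_le (x₁ x₂ t : ℝ) :
    ‖I * l₁ + I * l₂ - Real.exp (x₁ - t) + Real.exp (t - x₂)‖ ≤
      |l₁| + |l₂| + (Real.exp (x₁ - t) + Real.exp (t - x₂)) := by
  grw [norm_add_le, norm_sub_le, norm_add_le]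
  simp only [norm_mul, norm_I, one_mul, norm_real, Real.norm_eq_abs, Real.abs_exp]
  linarith

lemma hasDerivAt_coeff_mul_integrand_fst (x₁ x₂ t : ℝ) :
    HasDerivAt (fun x => (I * l₂ - Real.exp (x - t)) * integrand l₁ l₂ x x₂ t)
      (((I * l₂ - Real.exp (x₁ - t)) ^ 2 - Real.exp (x₁ - t)) * integrand l₁ l₂ x₁ x₂ t) x₁ :=
  (((hasDerivAt_ofReal_exp_sub_const t x₁).const_sub (I * l₂)).mul
    (hasDerivAt_integrand_fst l₁ l₂ x₁ x₂ t)).congr_deriv (by ring)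

lemma hasDerivAt_coeff_mul_integrand_snd (x₁ x₂ t : ℝ) :
    HasDerivAt (fun x => (I * l₂ + Real.exp (t - x)) * integrand l₁ l₂ x₁ x t)
      (((I * l₂ + Real.exp (t - x₂)) ^ 2 - Real.exp (t - x₂)) * integrand l₁ l₂ x₁ x₂ t) x₂ :=
  (((hasDerivAt_ofReal_exp_const_sub t x₂).const_add (I * l₂)).mul
    (hasDerivAt_integrand_snd l₁ l₂ x₁ x₂ t)).congr_deriv (by ring)

lemma hasDerivAt_integral_integrand_fst (x₀ x₂ : ℝ) :
    Integrable (fun t => (I * l₂ - Real.exp (x₀ - t)) * integrand l₁ l₂ x₀ x₂ t) ∧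
      HasDerivAt (fun x => ∫ t, integrand l₁ l₂ x x₂ t)
        (∫ t, (I * l₂ - Real.exp (x₀ - t)) * integrand l₁ l₂ x₀ x₂ t) x₀ :=
  hasDerivAt_integral_of_le_exp_neg_abs (F := fun x => integrand l₁ l₂ x x₂) one_half_pos
    (fun _ => by fun_prop) (by fun_prop)
    (integrable_integrand l₁ l₂ x₀ x₂)
    (fun _ hx t => norm_mul_integrand_le l₁ l₂ (abs_nonneg l₂)
      ((norm_lt_of_mem_ball hx).le.trans (le_max_left _ |x₂|)) (le_max_right _ _) t
      (norm_le_one_add_sq (norm_coeff_fst_le l₂ _ x₂ t)))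
    (fun x t => hasDerivAt_integrand_fst l₁ l₂ x x₂ t)

lemma hasDerivAt_integral_coeff_mul_integrand_fst (x₀ x₂ : ℝ) :
    Integrable (fun t => ((I * l₂ - Real.exp (x₀ - t)) ^ 2 - Real.exp (x₀ - t)) *
        integrand l₁ l₂ x₀ x₂ t) ∧
      HasDerivAt (fun x => ∫ t, (I * l₂ - Real.exp (x - t)) * integrand l₁ l₂ x x₂ t)
        (∫ t, ((I * l₂ - Real.exp (x₀ - t)) ^ 2 - Real.exp (x₀ - t)) *
          integrand l₁ l₂ x₀ x₂ t) x₀ :=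
  hasDerivAt_integral_of_le_exp_neg_abs one_half_pos (fun _ => by fun_prop) (by fun_prop)
    (hasDerivAt_integral_integrand_fst l₁ l₂ x₀ x₂).1
    (fun _ hx t => norm_mul_integrand_le l₁ l₂ (abs_nonneg l₂)
      ((norm_lt_of_mem_ball hx).le.trans (le_max_left _ |x₂|)) (le_max_right _ _) t
      (norm_sq_sub_ofReal_le (abs_nonneg l₂) (norm_coeff_fst_le l₂ _ x₂ t)
        (Real.exp_pos _).le (le_add_of_nonneg_right (Real.exp_pos _).le)))
    (fun x t => hasDerivAt_coeff_mul_integrand_fst l₁ l₂ x x₂ t)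

lemma hasDerivAt_integral_integrand_snd (x₁ x₀ : ℝ) :
    Integrable (fun t => (I * l₂ + Real.exp (t - x₀)) * integrand l₁ l₂ x₁ x₀ t) ∧
      HasDerivAt (fun x => ∫ t, integrand l₁ l₂ x₁ x t)
        (∫ t, (I * l₂ + Real.exp (t - x₀)) * integrand l₁ l₂ x₁ x₀ t) x₀ :=
  hasDerivAt_integral_of_le_exp_neg_abs one_half_pos (fun _ => by fun_prop) (by fun_prop)
    (integrable_integrand l₁ l₂ x₁ x₀)
    (fun _ hx t => norm_mul_integrand_le l₁ l₂ (abs_nonneg l₂) (le_max_left |x₁| _)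
      ((norm_lt_of_mem_ball hx).le.trans (le_max_right _ _)) t
      (norm_le_one_add_sq (norm_coeff_snd_le l₂ x₁ _ t)))
    (fun x t => hasDerivAt_integrand_snd l₁ l₂ x₁ x t)

lemma hasDerivAt_integral_coeff_mul_integrand_snd (x₁ x₀ : ℝ) :
    Integrable (fun t => ((I * l₂ + Real.exp (t - x₀)) ^ 2 - Real.exp (t - x₀)) *
        integrand l₁ l₂ x₁ x₀ t) ∧
      HasDerivAt (fun x => ∫ t, (I * l₂ + Real.exp (t - x)) * integrand l₁ l₂ x₁ x t)
        (∫ t, ((I * l₂ + Real.exp (t - x₀)) ^ 2 - Real.exp (t - x₀)) *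
          integrand l₁ l₂ x₁ x₀ t) x₀ :=
  hasDerivAt_integral_of_le_exp_neg_abs one_half_pos (fun _ => by fun_prop) (by fun_prop)
    (hasDerivAt_integral_integrand_snd l₁ l₂ x₁ x₀).1
    (fun _ hx t => norm_mul_integrand_le l₁ l₂ (abs_nonneg l₂) (le_max_left |x₁| _)
      ((norm_lt_of_mem_ball hx).le.trans (le_max_right _ _)) t
      (norm_sq_sub_ofReal_le (abs_nonneg l₂) (norm_coeff_snd_le l₂ x₁ _ t)
        (Real.exp_pos _).le (le_add_of_nonneg_left (Real.exp_pos _).le)))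
    (fun x t => hasDerivAt_coeff_mul_integrand_snd l₁ l₂ x₁ x t)

lemma deriv_deriv_integral_fst (x₁ x₂ : ℝ) :
    deriv (fun u => deriv (fun v => ∫ t, integrand l₁ l₂ v x₂ t) u) x₁ =
      ∫ t, ((I * l₂ - Real.exp (x₁ - t)) ^ 2 - Real.exp (x₁ - t)) * integrand l₁ l₂ x₁ x₂ t := by
  have hderiv : (fun u => deriv (fun v => ∫ t, integrand l₁ l₂ v x₂ t) u) =
      fun u => ∫ t, (I * l₂ - Real.exp (u - t)) * integrand l₁ l₂ u x₂ t :=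
    funext fun u => (hasDerivAt_integral_integrand_fst l₁ l₂ u x₂).2.deriv
  rw [hderiv, (hasDerivAt_integral_coeff_mul_integrand_fst l₁ l₂ x₁ x₂).2.deriv]

lemma deriv_deriv_integral_snd (x₁ x₂ : ℝ) :
    deriv (fun u => deriv (fun v => ∫ t, integrand l₁ l₂ x₁ v t) u) x₂ =
      ∫ t, ((I * l₂ + Real.exp (t - x₂)) ^ 2 - Real.exp (t - x₂)) * integrand l₁ l₂ x₁ x₂ t := by
  have hderiv : (fun u => deriv (fun v => ∫ t, integrand l₁ l₂ x₁ v t) u) =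
      fun u => ∫ t, (I * l₂ + Real.exp (t - u)) * integrand l₁ l₂ x₁ u t :=
    funext fun u => (hasDerivAt_integral_integrand_snd l₁ l₂ x₁ u).2.deriv
  rw [hderiv, (hasDerivAt_integral_coeff_mul_integrand_snd l₁ l₂ x₁ x₂).2.deriv]

lemma hasDerivAt_flux (x₁ x₂ t : ℝ) :
    HasDerivAt (fun t => (I * l₁ + I * l₂ - Real.exp (x₁ - t) + Real.exp (t - x₂)) *
        integrand l₁ l₂ x₁ x₂ t)
      (-(((I * l₂ - Real.exp (x₁ - t)) ^ 2 - Real.exp (x₁ - t)) * integrand l₁ l₂ x₁ x₂ t +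
          ((I * l₂ + Real.exp (t - x₂)) ^ 2 - Real.exp (t - x₂)) * integrand l₁ l₂ x₁ x₂ t) +
        (2 * Real.exp (x₁ - x₂) - (l₁ ^ 2 + l₂ ^ 2)) * integrand l₁ l₂ x₁ x₂ t) t := by
  have hcoeff := ((hasDerivAt_ofReal_exp_const_sub x₁ t).const_sub (I * l₁ + I * l₂)).fun_add
    (hasDerivAt_ofReal_exp_sub_const x₂ t)
  refine (hcoeff.mul (hasDerivAt_integrand l₁ l₂ x₁ x₂ t)).congr_deriv ?_
  have hexp : (Real.exp (x₁ - x₂) : ℂ) = Real.exp (x₁ - t) * Real.exp (t - x₂) := by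
    rw [← ofReal_mul, ← Real.exp_add, sub_add_sub_cancel]
  rw [hexp]
  linear_combination (l₁ ^ 2 + l₂ ^ 2 : ℂ) * integrand l₁ l₂ x₁ x₂ t * I_sq

lemma integral_toda_eq_zero (x₁ x₂ : ℝ) :
    -((∫ t, ((I * l₂ - Real.exp (x₁ - t)) ^ 2 - Real.exp (x₁ - t)) * integrand l₁ l₂ x₁ x₂ t) +
        ∫ t, ((I * l₂ + Real.exp (t - x₂)) ^ 2 - Real.exp (t - x₂)) * integrand l₁ l₂ x₁ x₂ t) +
      (2 * Real.exp (x₁ - x₂) - (l₁ ^ 2 + l₂ ^ 2)) * ∫ t, integrand l₁ l₂ x₁ x₂ t = 0 := by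
  have h₁ := (hasDerivAt_integral_coeff_mul_integrand_fst l₁ l₂ x₁ x₂).1
  have h₂ := (hasDerivAt_integral_coeff_mul_integrand_snd l₁ l₂ x₁ x₂).1
  have h₀ := integrable_integrand l₁ l₂ x₁ x₂
  have hflux := integral_eq_zero_of_hasDerivAt_of_integrable (hasDerivAt_flux l₁ l₂ x₁ x₂)
    ((h₁.fun_add h₂).fun_neg.fun_add (h₀.const_mul _))
    (integrable_mul_integrand l₁ l₂ (add_nonneg (abs_nonneg l₁) (abs_nonneg l₂)) x₁ x₂
      (by fun_prop) fun t => norm_le_one_add_sq (norm_flux_coeff_le l₁ l₂ x₁ x₂ t))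
  rwa [integral_add (h₁.fun_add h₂).fun_neg (h₀.const_mul _), integral_neg, integral_add h₁ h₂,
    integral_const_mul] at hflux

end Whittaker

/-- The Givental integral representation of the `gl₂`-Whittaker function is an
eigenfunction of the quadratic Toda Hamiltonian
`H̃₂ = −(1/2)(∂²_{x₁} + ∂²_{x₂}) + e^{x₁−x₂}` with eigenvalue `(λ₁² + λ₂²)/2`. -/
theorem gl2_whittaker_toda_equation (lam₁ lam₂ : ℝ) (F : ℝ → ℝ → ℂ)
    (hF : ∀ x₁ x₂ : ℝ, F x₁ x₂ =
      ∫ t : ℝ, Complex.exp (I * (lam₁ : ℂ) * (t : ℂ) +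
        I * (lam₂ : ℂ) * ((x₁ : ℂ) + (x₂ : ℂ) - (t : ℂ)) -
        Real.exp (x₁ - t) - Real.exp (t - x₂))) :
    ∀ x₁ x₂ : ℝ,
      -(1 / 2 : ℂ) * (deriv (fun u : ℝ => deriv (fun v : ℝ => F v x₂) u) x₁ +
          deriv (fun u : ℝ => deriv (fun v : ℝ => F x₁ v) u) x₂) +
        (Real.exp (x₁ - x₂) : ℂ) * F x₁ x₂ =
      (1 / 2 : ℂ) * ((lam₁ : ℂ) ^ 2 + (lam₂ : ℂ) ^ 2) * F x₁ x₂ := by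
  intro x₁ x₂
  obtain rfl : F = fun v w => ∫ t, Whittaker.integrand lam₁ lam₂ v w t := funext₂ hF
  rw [Whittaker.deriv_deriv_integral_fst, Whittaker.deriv_deriv_integral_snd]
  linear_combination (1 / 2 : ℂ) * Whittaker.integral_toda_eq_zero lam₁ lam₂ x₁ x₂
end

section
/- (Barnes' first lemma) Let a, b, c, d be complex numbers with Re(a), Re(b), Re(c), Re(d) all positive. Then (1/2π) · ∫_{-∞}^{∞} Γ(a + i·t)·Γ(b + i·t)·Γ(c − i·t)·Γ(d − i·t) dt = Γ(a+c)·Γ(a+d)·Γ(b+c)·Γ(b+d) / Γ(a+b+c+d). -/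
/-!
Let `σ` be the logistic sigmoid and `k_{p,q}(u) = σ(u)^p σ(-u)^q`. The substitution `x = σ(u)`
turns `∫ k_{p,q}` into the Beta integral, so `∫ k_{p,q} = Γ(p)Γ(q)/Γ(p+q)`. Since
`σ(u)/σ(-u) = e^u`, multiplying `k_{p,q}` by `e^{-2πiξu}` shifts `(p, q)` to
`(p - 2πiξ, q + 2πiξ)`, whence `𝓕 k_{p,q}(ξ) = Γ(p - 2πiξ)Γ(q + 2πiξ)/Γ(p+q)`. After `t = -2πξ`
the Barnes integrand is `Γ(a+c)Γ(b+d) 𝓕 k_{a,c} 𝓕 k_{b,d}`, and by the multiplication formula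
and Fourier inversion `∫ 𝓕 k_{a,c} 𝓕 k_{b,d} = ∫ k_{a,c}(x) k_{b,d}(-x) dx = ∫ k_{a+d,b+c}`.
Fourier inversion applies because `k_{p,q}` and its first two derivatives are integrable.
-/

open MeasureTheory Complex Real FourierTransform

namespace Real

variable {E : Type*} [NormedAddCommGroup E] [NormedSpace ℂ E]

lemma norm_fourier_le_integral_norm (f : ℝ → E) (ξ : ℝ) : ‖𝓕 f ξ‖ ≤ ∫ x, ‖f x‖ :=
  VectorFourier.norm_fourierIntegral_le_integral_norm 𝐞 volume (innerₗ ℝ) f ξ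

lemma continuous_fourier {f : ℝ → E} (hf : Integrable f) : Continuous (𝓕 f) :=
  VectorFourier.fourierIntegral_continuous continuous_fourierChar continuous_inner hf

lemma integrable_fourier_of_integrable_deriv_deriv {f : ℝ → E} (hf : Integrable f)
    (hf' : Differentiable ℝ f) (hf'i : Integrable (deriv f))
    (hf'' : Differentiable ℝ (deriv f)) (hf''i : Integrable (deriv (deriv f))) :
    Integrable (𝓕 f) := by
  have h2π : 2 * π ≠ 0 := by positivity
  have hbound (ξ : ℝ) : ‖𝓕 f ξ‖ ≤
      ((∫ x, ‖f x‖) + ∫ x, ‖deriv (deriv f) x‖) * (1 + (2 * π * ξ) ^ 2)⁻¹ := by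
    have h2 : ‖𝓕 f ξ‖ * (2 * π * ξ) ^ 2 ≤ ∫ x, ‖deriv (deriv f) x‖ :=
      calc ‖𝓕 f ξ‖ * (2 * π * ξ) ^ 2 = ‖𝓕 (deriv (deriv f)) ξ‖ := by
            rw [fourier_deriv hf'i hf'' hf''i, fourier_deriv hf hf' hf'i]
            simp only [norm_smul, norm_mul, Complex.norm_two, norm_real, norm_I, mul_one,
              Real.norm_eq_abs, abs_of_pos pi_pos]
            rw [← sq_abs (2 * π * ξ), abs_mul, abs_of_pos (by positivity : (0 : ℝ) < 2 * π)]
            ring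
        _ ≤ _ := norm_fourier_le_integral_norm _ _
    rw [le_mul_inv_iff₀ (by positivity), mul_add, mul_one]
    linarith [norm_fourier_le_integral_norm f ξ]
  refine Integrable.mono' ((integrable_inv_one_add_sq.comp_mul_left' h2π).const_mul _)
    (continuous_fourier hf).aestronglyMeasurable (Filter.Eventually.of_forall hbound)

lemma integral_fourier_mul_fourier {f g : ℝ → ℂ} (hf : Integrable f) (hg : Integrable g)
    (hg' : Continuous g) (hFg : Integrable (𝓕 g)) :
    ∫ ξ, 𝓕 f ξ * 𝓕 g ξ = ∫ x, f x * g (-x) := by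
  have hflip : (innerₗ ℝ).flip = innerₗ ℝ :=
    LinearMap.ext₂ fun x y => real_inner_comm x y
  have := VectorFourier.integral_fourierIntegral_smul_eq_flip (L := innerₗ ℝ)
    continuous_fourierChar continuous_inner hf hFg
  rw [hflip] at this
  refine this.trans (integral_congr_ae (Filter.Eventually.of_forall fun x => ?_))
  change f x * 𝓕 (𝓕 g) x = f x * g (-x)
  rw [← neg_neg x, ← fourierInv_eq_fourier_neg, hg.fourierInv_fourier_eq hFg hg'.continuousAt,
    neg_neg]

end Real

lemma ofReal_exp_cpow (x : ℝ) (s : ℂ) : ((rexp x : ℝ) : ℂ) ^ s = cexp (x * s) := by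
  rw [cpow_def_of_ne_zero (ofReal_ne_zero.2 (exp_pos x).ne'), ← ofReal_log (exp_pos x).le,
    Real.log_exp]

lemma HasDerivAt.ofReal_cpow_const {f : ℝ → ℝ} {f' x : ℝ} (hf : HasDerivAt f f' x)
    (hx : 0 < f x) (p : ℂ) :
    HasDerivAt (fun y => (f y : ℂ) ^ p) (p * (f x : ℂ) ^ (p - 1) * f') x := by
  have hpow := (hasStrictDerivAt_cpow_const (c := p) (ofReal_mem_slitPlane.2 hx)).hasDerivAt
  exact hpow.comp x hf.ofReal_comp

lemma ofReal_sigmoid_ne_zero (u : ℝ) : (sigmoid u : ℂ) ≠ 0 :=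
  ofReal_ne_zero.2 (sigmoid_pos u).ne'

noncomputable def logisticBeta (p q : ℂ) (u : ℝ) : ℂ :=
  (sigmoid u : ℂ) ^ p * (sigmoid (-u) : ℂ) ^ q

lemma logisticBeta_neg (p q : ℂ) (u : ℝ) : logisticBeta p q (-u) = logisticBeta q p u := by
  rw [logisticBeta, logisticBeta, neg_neg, mul_comm]

lemma logisticBeta_mul_logisticBeta_neg (a b c d : ℂ) (u : ℝ) :
    logisticBeta a c u * logisticBeta b d (-u) = logisticBeta (a + d) (b + c) u := by
  simp only [logisticBeta, neg_neg, cpow_add _ _ (ofReal_sigmoid_ne_zero _)]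
  ring

lemma logisticBeta_sub_add (p q s : ℂ) (u : ℝ) :
    logisticBeta (p - s) (q + s) u = cexp (-(s * u)) * logisticBeta p q u := by
  have hσ : (sigmoid (-u) : ℂ) ^ s = (sigmoid u : ℂ) ^ s * cexp (-(s * u)) := by
    rw [← sigmoid_mul_rexp_neg, ofReal_mul, mul_cpow_ofReal_nonneg (sigmoid_pos u).le
      (exp_pos _).le, ofReal_exp_cpow, ofReal_neg, neg_mul, mul_comm (u : ℂ)]
  simp only [logisticBeta, cpow_sub _ _ (ofReal_sigmoid_ne_zero u),
    cpow_add _ _ (ofReal_sigmoid_ne_zero _), hσ]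
  field_simp [cpow_ne_zero_iff.2 (Or.inl (ofReal_sigmoid_ne_zero u))]

lemma hasDerivAt_logisticBeta (p q : ℂ) (u : ℝ) :
    HasDerivAt (logisticBeta p q)
      (p * logisticBeta p (q + 1) u - q * logisticBeta (p + 1) q u) u := by
  have hσ := (hasDerivAt_sigmoid u).ofReal_cpow_const (sigmoid_pos u) p
  have hσ' := ((hasDerivAt_sigmoid (-u)).comp u (hasDerivAt_neg u)).ofReal_cpow_const
    (sigmoid_pos (-u)) q
  refine (hσ.mul hσ').congr_deriv ?_
  have h1 := sigmoid_neg u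
  have h2 := sigmoid_neg (-u)
  rw [neg_neg] at h2
  simp only [logisticBeta, Function.comp_apply, cpow_add _ _ (ofReal_sigmoid_ne_zero _),
    cpow_sub _ _ (ofReal_sigmoid_ne_zero _), cpow_one]
  rw [← h1, ← h2]
  field_simp [ofReal_sigmoid_ne_zero u, ofReal_sigmoid_ne_zero (-u)]
  push_cast
  ring

lemma deriv_logisticBeta (p q : ℂ) :
    deriv (logisticBeta p q) =
      fun u => p * logisticBeta p (q + 1) u - q * logisticBeta (p + 1) q u :=
  funext fun u => (hasDerivAt_logisticBeta p q u).deriv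

lemma differentiable_logisticBeta (p q : ℂ) : Differentiable ℝ (logisticBeta p q) :=
  fun u => (hasDerivAt_logisticBeta p q u).differentiableAt

lemma norm_logisticBeta (p q : ℂ) (u : ℝ) :
    ‖logisticBeta p q u‖ = sigmoid u ^ p.re * sigmoid (-u) ^ q.re := by
  rw [logisticBeta, norm_mul, norm_cpow_eq_rpow_re_of_pos (sigmoid_pos u),
    norm_cpow_eq_rpow_re_of_pos (sigmoid_pos (-u))]

lemma norm_logisticBeta_le {p q : ℂ} (hp : 0 ≤ p.re) (hq : 0 ≤ q.re) (u : ℝ) :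
    ‖logisticBeta p q u‖ ≤ rexp (p.re * u) := by
  have hσ : sigmoid u ≤ rexp u := by
    have h := sigmoid_mul_rexp_neg (-u)
    rw [neg_neg] at h
    rw [← h]
    exact mul_le_of_le_one_left (exp_pos u).le (sigmoid_le_one _)
  rw [norm_logisticBeta, mul_comm p.re, Real.exp_mul]
  exact (mul_le_of_le_one_right (rpow_nonneg (sigmoid_pos u).le _)
    (rpow_le_one (sigmoid_pos _).le (sigmoid_le_one _) hq)).trans
    (rpow_le_rpow (sigmoid_pos u).le hσ hp)

lemma integrable_logisticBeta {p q : ℂ} (hp : 0 < p.re) (hq : 0 < q.re) :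
    Integrable (logisticBeta p q) := by
  have hmeas := (differentiable_logisticBeta p q).continuous.aestronglyMeasurable (μ := volume)
  rw [← integrableOn_univ, ← Set.Iic_union_Ioi (a := (0 : ℝ))]
  refine IntegrableOn.union ?_ ?_
  · exact Integrable.mono' (integrableOn_exp_mul_Iic hp 0) hmeas.restrict
      (Filter.Eventually.of_forall fun u => norm_logisticBeta_le hp.le hq.le u)
  · refine Integrable.mono' (exp_neg_integrableOn_Ioi 0 hq) hmeas.restrict
      (Filter.Eventually.of_forall fun u => ?_)
    rw [← neg_neg u, logisticBeta_neg, neg_neg, neg_mul, ← mul_neg]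
    exact norm_logisticBeta_le hq.le hp.le (-u)

lemma integral_logisticBeta {p q : ℂ} (hp : 0 < p.re) (hq : 0 < q.re) :
    ∫ u, logisticBeta p q u = Gamma p * Gamma q / Gamma (p + q) := by
  have hsubst (u : ℝ) : logisticBeta p q u = |sigmoid u * (1 - sigmoid u)| •
      ((sigmoid u : ℂ) ^ (p - 1) * (1 - (sigmoid u : ℂ)) ^ (q - 1)) := by
    have h1 : 1 - (sigmoid u : ℂ) = (sigmoid (-u) : ℂ) := by rw [sigmoid_neg]; push_cast; ring
    rw [h1, ← sigmoid_neg, abs_of_pos (mul_pos (sigmoid_pos u) (sigmoid_pos (-u))), real_smul,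
      logisticBeta, cpow_sub _ _ (ofReal_sigmoid_ne_zero _),
      cpow_sub _ _ (ofReal_sigmoid_ne_zero _), cpow_one, cpow_one]
    field_simp [ofReal_sigmoid_ne_zero u, ofReal_sigmoid_ne_zero (-u)]
    push_cast
    ring
  calc ∫ u, logisticBeta p q u
      = ∫ x in sigmoid '' Set.univ, (x : ℂ) ^ (p - 1) * (1 - (x : ℂ)) ^ (q - 1) := by
        rw [integral_image_eq_integral_abs_deriv_smul MeasurableSet.univ
          (fun u _ => (hasDerivAt_sigmoid u).hasDerivWithinAt) sigmoid_injective.injOn,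
          setIntegral_univ]
        exact integral_congr_ae (Filter.Eventually.of_forall hsubst)
    _ = betaIntegral p q := by
        rw [Set.image_univ, range_sigmoid, betaIntegral,
          intervalIntegral.integral_of_le zero_le_one, integral_Ioc_eq_integral_Ioo]
    _ = Gamma p * Gamma q / Gamma (p + q) := by
        rw [Gamma_mul_Gamma_eq_betaIntegral hp hq, mul_div_cancel_left₀ _
          (Gamma_ne_zero_of_re_pos (by simpa using add_pos hp hq))]

lemma fourier_logisticBeta {p q : ℂ} (hp : 0 < p.re) (hq : 0 < q.re) (ξ : ℝ) :
    𝓕 (logisticBeta p q) ξ =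
      Gamma (p - (2 * π * ξ : ℝ) * I) * Gamma (q + (2 * π * ξ : ℝ) * I) / Gamma (p + q) := by
  have hshift (u : ℝ) : cexp (↑(-2 * π * u * ξ) * I) • logisticBeta p q u =
      logisticBeta (p - (2 * π * ξ : ℝ) * I) (q + (2 * π * ξ : ℝ) * I) u := by
    rw [logisticBeta_sub_add, smul_eq_mul]
    push_cast
    ring_nf
  rw [Real.fourier_real_eq_integral_exp_smul,
    integral_congr_ae (Filter.Eventually.of_forall hshift),
    integral_logisticBeta (by simpa using hp) (by simpa using hq), sub_add_add_cancel]

lemma integrable_fourier_logisticBeta {p q : ℂ} (hp : 0 < p.re) (hq : 0 < q.re) :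
    Integrable (𝓕 (logisticBeta p q)) := by
  have hderiv2 (u : ℝ) : HasDerivAt (deriv (logisticBeta p q))
      (p * (p * logisticBeta p (q + 1 + 1) u - (q + 1) * logisticBeta (p + 1) (q + 1) u) -
        q * ((p + 1) * logisticBeta (p + 1) (q + 1) u - q * logisticBeta (p + 1 + 1) q u))
      u := by
    rw [deriv_logisticBeta]
    exact ((hasDerivAt_logisticBeta p (q + 1) u).const_mul p).sub
      ((hasDerivAt_logisticBeta (p + 1) q u).const_mul q)
  have := integrable_logisticBeta (p := p) (q := q + 1) hp (by simp; linarith)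
  have := integrable_logisticBeta (p := p + 1) (q := q) (by simp; linarith) hq
  have := integrable_logisticBeta (p := p) (q := q + 1 + 1) hp (by simp; linarith)
  have := integrable_logisticBeta (p := p + 1) (q := q + 1) (by simp; linarith) (by simp; linarith)
  have := integrable_logisticBeta (p := p + 1 + 1) (q := q) (by simp; linarith) hq
  refine Real.integrable_fourier_of_integrable_deriv_deriv (integrable_logisticBeta hp hq)
    (differentiable_logisticBeta p q) ?_ (fun u => (hderiv2 u).differentiableAt) ?_
  · rw [deriv_logisticBeta]
    fun_prop
  · rw [funext fun u => (hderiv2 u).deriv]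
    fun_prop

lemma integral_fourier_logisticBeta_mul_fourier {a b c d : ℂ} (ha : 0 < a.re) (hb : 0 < b.re)
    (hc : 0 < c.re) (hd : 0 < d.re) :
    ∫ ξ, 𝓕 (logisticBeta a c) ξ * 𝓕 (logisticBeta b d) ξ =
      Gamma (a + d) * Gamma (b + c) / Gamma (a + b + c + d) := by
  rw [Real.integral_fourier_mul_fourier (integrable_logisticBeta ha hc)
    (integrable_logisticBeta hb hd) (differentiable_logisticBeta b d).continuous
    (integrable_fourier_logisticBeta hb hd)]
  simp_rw [logisticBeta_mul_logisticBeta_neg]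
  rw [integral_logisticBeta (by simp; linarith) (by simp; linarith)]
  ring_nf

/-- Barnes' first lemma. -/
theorem barnes_first_lemma (a b c d : ℂ)
    (ha : 0 < a.re) (hb : 0 < b.re) (hc : 0 < c.re) (hd : 0 < d.re) :
    (1 / (2 * (π : ℂ))) * ∫ t : ℝ,
        Complex.Gamma (a + I * t) * Complex.Gamma (b + I * t) *
        Complex.Gamma (c - I * t) * Complex.Gamma (d - I * t) =
      Complex.Gamma (a + c) * Complex.Gamma (a + d) * Complex.Gamma (b + c) *
        Complex.Gamma (b + d) / Complex.Gamma (a + b + c + d) := by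
  let H : ℝ → ℂ := fun ξ => 𝓕 (logisticBeta a c) ξ * 𝓕 (logisticBeta b d) ξ
  have hintegrand (t : ℝ) : Gamma (a + I * t) * Gamma (b + I * t) * Gamma (c - I * t) *
      Gamma (d - I * t) = Gamma (a + c) * Gamma (b + d) * H ((-(2 * π))⁻¹ * t) := by
    have hξ : 2 * π * ((-(2 * π))⁻¹ * t) = -t := by field_simp
    simp only [H, fourier_logisticBeta ha hc, fourier_logisticBeta hb hd, hξ]
    field_simp [Gamma_ne_zero_of_re_pos (by simp; linarith : 0 < (a + c).re),
      Gamma_ne_zero_of_re_pos (by simp; linarith : 0 < (b + d).re)]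
    push_cast
    ring_nf
  rw [integral_congr_ae (Filter.Eventually.of_forall hintegrand), integral_const_mul,
    Measure.integral_comp_mul_left H, integral_fourier_logisticBeta_mul_fourier ha hb hc hd,
    inv_inv, abs_neg, abs_of_pos two_pi_pos, real_smul]
  field_simp
  push_cast
  ring
end

section
/- Let ν, s be complex numbers with Re(s) > |Re(ν)|. Then ∫_{0}^{∞} y^{s−1} · ( ∫_{-∞}^{∞} exp(ν·u − y·cosh(u)) du ) dy = 2^{s−1} · Γ((s+ν)/2) · Γ((s−ν)/2). -/
/-!
Integrating in `y` first (Fubini) gives `Γ(s) e^{νu} (cosh u)^{-s}`. The logistic substitution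
`t = σ(2u)` turns the `u`-integral into a Beta integral: since `σ(2u) = e^u / (2 cosh u)` and
`1 - σ(2u) = e^{-u} / (2 cosh u)`, we have `dt = 2 σ(2u) (1 - σ(2u)) du` and
`e^{νu} (cosh u)^{-s} = 2^s σ(2u)^p (1 - σ(2u))^q` with `p = (s + ν)/2`, `q = (s - ν)/2`.
Hence the `u`-integral is `2^{s-1} B(p, q)`, and `Γ(s) B(p, q) = Γ(p) Γ(q)`. The same computation
with `Re ν`, `Re s` in place of `ν`, `s` gives the absolute convergence that Fubini needs.
-/

open MeasureTheory Complex Set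

namespace Real

lemma sigmoid_two_mul (u : ℝ) : sigmoid (2 * u) = exp u / (2 * cosh u) := by
  rw [sigmoid_def, cosh_eq, show -(2 * u) = -u + -u by ring, exp_add]
  field_simp
  rw [add_mul, one_mul, sq, mul_assoc, ← exp_add (-u) u, neg_add_cancel, exp_zero, mul_one,
    add_comm]

lemma one_sub_sigmoid_two_mul (u : ℝ) : 1 - sigmoid (2 * u) = exp (-u) / (2 * cosh u) := by
  rw [← sigmoid_neg, ← mul_neg, sigmoid_two_mul, cosh_neg]

variable {E : Type*} [NormedAddCommGroup E] [NormedSpace ℝ E]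

lemma abs_sigmoid_mul_one_sub_sigmoid (u : ℝ) :
    |sigmoid u * (1 - sigmoid u)| = sigmoid u * (1 - sigmoid u) :=
  abs_of_pos (mul_pos (sigmoid_pos u) (sub_pos.2 (sigmoid_lt_one u)))

lemma integrableOn_Ioo_zero_one_iff_integrable_sigmoid (g : ℝ → E) :
    IntegrableOn g (Ioo 0 1) ↔
      Integrable fun u => (sigmoid u * (1 - sigmoid u)) • g (sigmoid u) := by
  have := integrableOn_image_iff_integrableOn_abs_deriv_smul MeasurableSet.univ
    (fun u _ => (hasDerivAt_sigmoid u).hasDerivWithinAt) sigmoid_injective.injOn g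
  simp_rw [image_univ, range_sigmoid, integrableOn_univ, abs_sigmoid_mul_one_sub_sigmoid] at this
  exact this

lemma integral_Ioo_zero_one_eq_integral_sigmoid (g : ℝ → E) :
    ∫ t in Ioo 0 1, g t = ∫ u, (sigmoid u * (1 - sigmoid u)) • g (sigmoid u) := by
  have := integral_image_eq_integral_abs_deriv_smul MeasurableSet.univ
    (fun u _ => (hasDerivAt_sigmoid u).hasDerivWithinAt) sigmoid_injective.injOn g
  simp_rw [image_univ, range_sigmoid, Measure.restrict_univ,
    abs_sigmoid_mul_one_sub_sigmoid] at this
  exact this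

lemma sigmoid_smul_beta_integrand (p q : ℂ) (u : ℝ) :
    (sigmoid u * (1 - sigmoid u)) •
        ((sigmoid u : ℂ) ^ (p - 1) * (1 - (sigmoid u : ℂ)) ^ (q - 1)) =
      (sigmoid u : ℂ) ^ p * (1 - (sigmoid u : ℂ)) ^ q := by
  have h₀ : (sigmoid u : ℂ) ≠ 0 := ofReal_ne_zero.2 (sigmoid_pos u).ne'
  have h₁ : 1 - (sigmoid u : ℂ) ≠ 0 := by
    rw [← ofReal_one, ← ofReal_sub]; exact ofReal_ne_zero.2 (sub_pos.2 (sigmoid_lt_one u)).ne'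
  rw [real_smul, ofReal_mul, ofReal_sub, ofReal_one, cpow_sub _ _ h₀, cpow_sub _ _ h₁, cpow_one,
    cpow_one]
  field_simp

variable {p q : ℂ}

lemma integrable_sigmoid_cpow_mul_one_sub_sigmoid_cpow (hp : 0 < p.re) (hq : 0 < q.re) :
    Integrable fun u : ℝ => (sigmoid u : ℂ) ^ p * (1 - (sigmoid u : ℂ)) ^ q := by
  have hbeta := (betaIntegral_convergent hp hq).1
  rw [integrableOn_Ioc_iff_integrableOn_Ioo,
    integrableOn_Ioo_zero_one_iff_integrable_sigmoid] at hbeta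
  simpa only [sigmoid_smul_beta_integrand] using hbeta

lemma integral_sigmoid_cpow_mul_one_sub_sigmoid_cpow (p q : ℂ) :
    ∫ u : ℝ, (sigmoid u : ℂ) ^ p * (1 - (sigmoid u : ℂ)) ^ q = betaIntegral p q := by
  rw [betaIntegral, intervalIntegral.integral_of_le zero_le_one, integral_Ioc_eq_integral_Ioo,
    integral_Ioo_zero_one_eq_integral_sigmoid]
  simp only [sigmoid_smul_beta_integrand]

end Real

lemma Complex.ofReal_cpow_eq_exp_log_mul {x : ℝ} (hx : 0 < x) (c : ℂ) :
    (x : ℂ) ^ c = exp (Real.log x * c) := by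
  rw [cpow_def_of_ne_zero (ofReal_ne_zero.2 hx.ne'), ofReal_log hx.le]

lemma exp_mul_one_div_cosh_cpow_eq_sigmoid (ν s : ℂ) (u : ℝ) :
    exp (ν * u) * (1 / (Real.cosh u : ℂ)) ^ s =
      2 ^ s * ((Real.sigmoid (2 * u) : ℂ) ^ ((s + ν) / 2) *
        (1 - (Real.sigmoid (2 * u) : ℂ)) ^ ((s - ν) / 2)) := by
  have hcosh := Real.cosh_pos u
  have h2 : (2 : ℂ) ^ s = ((2 : ℝ) : ℂ) ^ s := by norm_num
  rw [← ofReal_one, ← ofReal_div, ← ofReal_sub, h2,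
    ofReal_cpow_eq_exp_log_mul (by positivity), ofReal_cpow_eq_exp_log_mul (by positivity),
    ofReal_cpow_eq_exp_log_mul (Real.sigmoid_pos _),
    ofReal_cpow_eq_exp_log_mul (sub_pos.2 (Real.sigmoid_lt_one _)), Real.one_sub_sigmoid_two_mul,
    Real.sigmoid_two_mul, ← exp_add, ← exp_add, ← exp_add,
    Real.log_div one_ne_zero hcosh.ne', Real.log_div (Real.exp_pos _).ne' (by positivity),
    Real.log_div (Real.exp_pos _).ne' (by positivity), Real.log_mul two_ne_zero hcosh.ne',
    Real.log_one, Real.log_exp, Real.log_exp]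
  congr 1
  push_cast
  ring

section

variable {ν s : ℂ}

lemma re_add_div_two_pos (h : |ν.re| < s.re) : 0 < ((s + ν) / 2).re := by
  have := neg_lt_of_abs_lt h
  simp only [div_ofNat_re, add_re]
  linarith

lemma re_sub_div_two_pos (h : |ν.re| < s.re) : 0 < ((s - ν) / 2).re := by
  have := lt_of_abs_lt h
  simp only [div_ofNat_re, sub_re]
  linarith

lemma integrable_exp_mul_one_div_cosh_cpow (h : |ν.re| < s.re) :
    Integrable fun u : ℝ => exp (ν * u) * (1 / (Real.cosh u : ℂ)) ^ s := by
  simp_rw [exp_mul_one_div_cosh_cpow_eq_sigmoid]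
  refine Integrable.const_mul ?_ _
  exact (Real.integrable_sigmoid_cpow_mul_one_sub_sigmoid_cpow (re_add_div_two_pos h)
    (re_sub_div_two_pos h)).comp_mul_left' two_ne_zero

lemma integral_exp_mul_one_div_cosh_cpow (ν s : ℂ) :
    ∫ u : ℝ, exp (ν * u) * (1 / (Real.cosh u : ℂ)) ^ s =
      2 ^ (s - 1) * betaIntegral ((s + ν) / 2) ((s - ν) / 2) := by
  simp_rw [exp_mul_one_div_cosh_cpow_eq_sigmoid]
  rw [integral_const_mul, Measure.integral_comp_mul_left
    (fun u : ℝ => (u.sigmoid : ℂ) ^ ((s + ν) / 2) * (1 - (u.sigmoid : ℂ)) ^ ((s - ν) / 2)),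
    Real.integral_sigmoid_cpow_mul_one_sub_sigmoid_cpow, cpow_sub _ _ two_ne_zero, cpow_one]
  rw [abs_of_pos (by norm_num), real_smul]
  push_cast
  ring

lemma measurable_cpow_mul_exp_sub_mul_cosh (ν s : ℂ) :
    Measurable (Function.uncurry fun (y u : ℝ) =>
      (y : ℂ) ^ (s - 1) * exp (ν * u - y * Real.cosh u)) := by
  fun_prop

lemma norm_cpow_mul_exp_sub_mul_cosh (ν s : ℂ) {y : ℝ} (hy : 0 < y) (u : ℝ) :
    ‖(y : ℂ) ^ (s - 1) * exp (ν * u - y * Real.cosh u)‖ =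
      Real.exp (ν.re * u) * (y ^ (s.re - 1) * Real.exp (-(Real.cosh u * y))) := by
  rw [norm_mul, norm_cpow_eq_rpow_re_of_pos hy, norm_exp, sub_re, one_re, sub_re,
    re_mul_ofReal, ← ofReal_mul, ofReal_re,
    show ν.re * u - y * Real.cosh u = ν.re * u + -(Real.cosh u * y) by ring, Real.exp_add]
  ring

lemma integral_Ioi_cpow_mul_exp_sub_mul_cosh (ν : ℂ) (hs : 0 < s.re) (u : ℝ) :
    ∫ y in Ioi (0 : ℝ), (y : ℂ) ^ (s - 1) * exp (ν * u - y * Real.cosh u) =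
      Gamma s * (exp (ν * u) * (1 / (Real.cosh u : ℂ)) ^ s) := by
  have hsplit (y : ℝ) : (y : ℂ) ^ (s - 1) * exp (ν * u - y * Real.cosh u) =
      exp (ν * u) * ((y : ℂ) ^ (s - 1) * exp (-(Real.cosh u * y))) := by
    rw [show ν * u - y * Real.cosh u = ν * u + -(Real.cosh u * y) by ring, exp_add]
    ring
  simp_rw [hsplit]
  rw [integral_const_mul, integral_cpow_mul_exp_neg_mul_Ioi hs (Real.cosh_pos u)]
  ring

lemma integral_Ioi_norm_cpow_mul_exp_sub_mul_cosh (ν : ℂ) (hs : 0 < s.re) (u : ℝ) :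
    ∫ y in Ioi (0 : ℝ), ‖(y : ℂ) ^ (s - 1) * exp (ν * u - y * Real.cosh u)‖ =
      Real.Gamma s.re * (Real.exp (ν.re * u) * (1 / Real.cosh u) ^ s.re) := by
  rw [setIntegral_congr_fun measurableSet_Ioi
      fun y hy => norm_cpow_mul_exp_sub_mul_cosh ν s hy u,
    integral_const_mul, Real.integral_rpow_mul_exp_neg_mul_Ioi hs (Real.cosh_pos u)]
  ring

lemma integrable_exp_mul_one_div_cosh_rpow {a σ : ℝ} (h : |a| < σ) :
    Integrable fun u : ℝ => Real.exp (a * u) * (1 / Real.cosh u) ^ σ := by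
  have := (integrable_exp_mul_one_div_cosh_cpow (ν := a) (s := σ) (by simpa using h)).re
  refine this.congr (ae_of_all _ fun u => ?_)
  dsimp only
  rw [← ofReal_one, ← ofReal_div, ← ofReal_cpow (one_div_pos.2 (Real.cosh_pos u)).le,
    ← ofReal_mul, ← ofReal_exp, ← ofReal_mul, RCLike.re_to_complex, ofReal_re]

lemma integrable_cpow_mul_exp_sub_mul_cosh (h : |ν.re| < s.re) :
    Integrable (Function.uncurry fun (y u : ℝ) =>
        (y : ℂ) ^ (s - 1) * exp (ν * u - y * Real.cosh u))
      ((volume.restrict (Ioi 0)).prod volume) := by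
  have hs : 0 < s.re := (abs_nonneg _).trans_lt h
  refine (integrable_prod_iff' (measurable_cpow_mul_exp_sub_mul_cosh ν s).aestronglyMeasurable).2
    ⟨ae_of_all _ fun u => ?_, ?_⟩
  · have hdom := (integrableOn_rpow_mul_exp_neg_mul_rpow (s := s.re - 1) (p := 1) (by linarith)
      one_pos (Real.cosh_pos u)).const_mul (Real.exp (ν.re * u))
    refine hdom.mono' ((measurable_cpow_mul_exp_sub_mul_cosh ν s).comp
      measurable_prodMk_right).aestronglyMeasurable
      ((ae_restrict_iff' measurableSet_Ioi).2 (ae_of_all _ fun y hy => ?_))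
    rw [Function.uncurry_apply_pair, norm_cpow_mul_exp_sub_mul_cosh ν s hy,
      Real.rpow_one, neg_mul]
  · simp_rw [Function.uncurry_apply_pair, integral_Ioi_norm_cpow_mul_exp_sub_mul_cosh ν hs]
    exact (integrable_exp_mul_one_div_cosh_rpow h).const_mul _

end

/-- Mellin transform of the Macdonald–Bessel function in integral form:
for `Re s > |Re ν|`,
`∫₀^∞ y^{s−1} (∫ℝ e^{νu − y·cosh u} du) dy = 2^{s−1} Γ((s+ν)/2) Γ((s−ν)/2)`. -/
theorem bessel_mellin_transform (ν s : ℂ) (h : |ν.re| < s.re) :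
    ∫ y in Set.Ioi (0 : ℝ), (y : ℂ) ^ (s - 1) *
        ∫ u : ℝ, Complex.exp (ν * (u : ℂ) - (y : ℂ) * Real.cosh u) =
      (2 : ℂ) ^ (s - 1) * Complex.Gamma ((s + ν) / 2) * Complex.Gamma ((s - ν) / 2) := by
  have hs : 0 < s.re := (abs_nonneg _).trans_lt h
  calc _ = ∫ y in Ioi (0 : ℝ), ∫ u : ℝ,
        (y : ℂ) ^ (s - 1) * exp (ν * u - y * Real.cosh u) := by
        simp_rw [integral_const_mul]
    _ = ∫ u : ℝ, ∫ y in Ioi (0 : ℝ), (y : ℂ) ^ (s - 1) * exp (ν * u - y * Real.cosh u) :=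
        integral_integral_swap (integrable_cpow_mul_exp_sub_mul_cosh h)
    _ = Gamma s * (2 ^ (s - 1) * betaIntegral ((s + ν) / 2) ((s - ν) / 2)) := by
        simp_rw [integral_Ioi_cpow_mul_exp_sub_mul_cosh ν hs]
        rw [integral_const_mul, integral_exp_mul_one_div_cosh_cpow]
    _ = _ := by
        have hΓ := Gamma_mul_Gamma_eq_betaIntegral (re_add_div_two_pos h) (re_sub_div_two_pos h)
        rw [show (s + ν) / 2 + (s - ν) / 2 = s by ring] at hΓ
        rw [mul_assoc, hΓ]
        ring
end

section
/- For every real λ and all x = (x₁,x₂), y = (y₁,y₂) ∈ ℝ²: e^{y₂ − y₁} · ∫_{-∞}^{∞} exp( −2π·i·u + (i·λ + 1/2)·((x₁−y₁) + (x₂−y₂)) − π·( e^{2(x₁−y₁)} + e^{2(x₂−y₂)} + u²·e^{2(x₂−y₁)} ) ) du = exp( (i·λ + 1/2)·(x₁−y₁) + (i·λ − 1/2)·(x₂−y₂) − π·( e^{2(x₁−y₁)} + e^{2(y₁−x₂)} + e^{2(x₂−y₂)} ) ). -/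
open MeasureTheory Complex Real

/-!
Only the factor `exp (-2πiu - π e^{2(x₂-y₁)} u²)` of the integrand depends on `u`; its integral is
the Fourier transform of a Gaussian, `∫ e^{-iωu - pu²} du = √(π/p) e^{-ω²/(4p)}`, with
`p = π e^{2(x₂-y₁)}` and `ω = 2π`. This produces the factor `e^{y₁-x₂}`, which together with
`e^{y₂-y₁}` shifts the exponent of `e^{x₂-y₂}` from `iλ + 1/2` to `iλ - 1/2`, and the new
potential term `π e^{2(y₁-x₂)}`.
-/

theorem integral_cexp_neg_I_mul_sub_mul_sq {p : ℝ} (hp : 0 < p) (ω : ℝ) :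
    ∫ u : ℝ, cexp (-I * ω * u - p * u ^ 2) = √(π / p) * cexp (-ω ^ 2 / (4 * p)) := by
  have hsqrt : ((π : ℂ) / p) ^ (1 / 2 : ℂ) = √(π / p) := by
    rw [Real.sqrt_eq_rpow, ofReal_cpow (by positivity)]
    push_cast
    rfl
  have := fourierIntegral_gaussian (b := p) (by simpa using hp) (-ω)
  simp only [← Complex.exp_add, hsqrt] at this
  convert this using 4 <;> ring

theorem integral_cexp_neg_two_pi_I_mul_sub_pi_exp_mul_sq (s : ℝ) :
    ∫ u : ℝ, cexp (-2 * π * I * u - π * Real.exp s * u ^ 2) =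
      Real.exp (-s / 2) * cexp (-π * Real.exp (-s)) := by
  have hsqrt : √(π / (π * Real.exp s)) = Real.exp (-s / 2) := by
    rw [div_mul_cancel_left₀ pi_ne_zero, ← Real.exp_neg,
      Real.sqrt_eq_iff_mul_self_eq_of_pos (by positivity), ← Real.exp_add]
    ring_nf
  have hquot : -(2 * π) ^ 2 / (4 * (π * Real.exp s)) = -π * Real.exp (-s) := by
    rw [Real.exp_neg]
    field_simp
    ring
  calc ∫ u : ℝ, cexp (-2 * π * I * u - π * Real.exp s * u ^ 2)
      = ∫ u : ℝ, cexp (-I * ↑(2 * π) * u - ↑(π * Real.exp s) * u ^ 2) := by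
        congr with u
        push_cast
        ring_nf
    _ = Real.exp (-s / 2) * cexp (-π * Real.exp (-s)) := by
        rw [integral_cexp_neg_I_mul_sub_mul_sq (by positivity), hsqrt]
        congr 3
        exact_mod_cast hquot

/-- The `GL(2,ℝ)` computation reducing the universal Baxter operator to the kernel of
the Toda-chain Baxter operator `Q₀^{gl₂}`. -/
theorem gl2_universal_baxter_reduction (lam : ℝ) (x y : ℝ × ℝ) :
    (Real.exp (y.2 - y.1) : ℂ) *
      ∫ u : ℝ, Complex.exp (-2 * π * I * (u : ℂ) +
        (I * (lam : ℂ) + 1 / 2) * (((x.1 : ℂ) - (y.1 : ℂ)) + ((x.2 : ℂ) - (y.2 : ℂ))) -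
        (π : ℂ) * (Real.exp (2 * (x.1 - y.1)) + Real.exp (2 * (x.2 - y.2)) +
          (u : ℂ) ^ 2 * Real.exp (2 * (x.2 - y.1)))) =
    Complex.exp ((I * (lam : ℂ) + 1 / 2) * ((x.1 : ℂ) - (y.1 : ℂ)) +
      (I * (lam : ℂ) - 1 / 2) * ((x.2 : ℂ) - (y.2 : ℂ)) -
      (π : ℂ) * (Real.exp (2 * (x.1 - y.1)) + Real.exp (2 * (y.1 - x.2)) +
        Real.exp (2 * (x.2 - y.2)))) := by
  have hsplit (u : ℝ) : cexp (-2 * π * I * u + (I * lam + 1 / 2) * ((x.1 - y.1) + (x.2 - y.2)) -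
      π * (Real.exp (2 * (x.1 - y.1)) + Real.exp (2 * (x.2 - y.2)) +
        u ^ 2 * Real.exp (2 * (x.2 - y.1)))) =
      cexp ((I * lam + 1 / 2) * ((x.1 - y.1) + (x.2 - y.2)) -
        π * (Real.exp (2 * (x.1 - y.1)) + Real.exp (2 * (x.2 - y.2)))) *
      cexp (-2 * π * I * u - π * Real.exp (2 * (x.2 - y.1)) * u ^ 2) := by
    rw [← Complex.exp_add]
    ring_nf
  simp_rw [hsplit, integral_const_mul, integral_cexp_neg_two_pi_I_mul_sub_pi_exp_mul_sq,
    show -(2 * (x.2 - y.1)) = 2 * (y.1 - x.2) by ring]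
  simp only [ofReal_exp, ← Complex.exp_add]
  congr 1
  push_cast
  ring
end

section
/- Let K = O(n) ⊂ G = GL(n,ℝ) and let μ be a (bi-invariant) Haar measure on G. Suppose φ, ψ : G → ℂ are continuous, compactly supported, and K-biinvariant (φ(k₁gk₂) = φ(g) for all k₁,k₂ ∈ K, g ∈ G, and similarly for ψ). Then the convolutions commute: for all g ∈ G, ∫_G φ(g·h^{−1})·ψ(h) dμ(h) = ∫_G ψ(g·h^{−1})·φ(h) dμ(h). -/
/-!
Gelfand's trick. Transposition `θ` is an involutive anti-automorphism of `GL(n,ℝ)`. Because the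
Haar measure `μ` is also right invariant, `μ` pushed forward by inversion or by `θ` is again a left
Haar measure `c • μ`, and `c ^ 2 = 1` since both maps are involutions; so `μ` is invariant under
both. The polar decomposition `g = k p` (`k` orthogonal, `p` symmetric) gives
`gᵀ = kᵀ g kᵀ`, so `θ` fixes every `O(n)`-biinvariant function, `φ ∗ ψ` included. Substituting
`h ↦ θ h` and then `h ↦ h⁻¹ g` in the convolution integral gives `(φ ∗ ψ) ∘ θ = (ψ ∘ θ) ∗ (φ ∘ θ)`,
hence `φ ∗ ψ = ψ ∗ φ`.
-/

open MeasureTheory Function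
open scoped ENNReal NNReal

instance Matrix.instLocallyCompactSpace {m n R : Type*} [Finite m] [Finite n] [TopologicalSpace R]
    [LocallyCompactSpace R] : LocallyCompactSpace (Matrix m n R) :=
  inferInstanceAs (LocallyCompactSpace (m → n → R))

instance Matrix.instSecondCountableTopology {m n R : Type*} [Countable m] [Countable n]
    [TopologicalSpace R] [SecondCountableTopology R] : SecondCountableTopology (Matrix m n R) :=
  inferInstanceAs (SecondCountableTopology (m → n → R))

instance MulOpposite.instSecondCountableTopology {M : Type*} [TopologicalSpace M]
    [SecondCountableTopology M] : SecondCountableTopology Mᵐᵒᵖ :=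
  MulOpposite.opHomeomorph.symm.isEmbedding.secondCountableTopology

instance Units.instSecondCountableTopology {M : Type*} [Monoid M] [TopologicalSpace M]
    [SecondCountableTopology M] : SecondCountableTopology Mˣ :=
  Units.isEmbedding_embedProduct.secondCountableTopology

namespace MeasureTheory.Measure

theorem map_eq_self_of_involutive_of_eq_smul {α : Type*} [MeasurableSpace α] {μ : Measure α}
    {f : α → α} (hf : Measurable f) (hinv : Involutive f) {c : ℝ≥0} (hc : μ.map f = c • μ) {s : Set α}
    (hs₀ : μ s ≠ 0) (hs : μ s ≠ ∞) : μ.map f = μ := by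
  have hμ : μ = (c ^ 2) • μ := by
    calc μ = (μ.map f).map f := by rw [map_map hf hf, hinv.comp_self, map_id]
      _ = (c ^ 2) • μ := by rw [hc, Measure.map_smul, hc, smul_smul, sq]
  have hcs : (c ^ 2 : ℝ≥0∞) * μ s = 1 * μ s := by
    conv_rhs => rw [hμ]
    simp [ENNReal.smul_def]
  have hc1 : c ^ 2 = 1 := by exact_mod_cast (ENNReal.mul_left_inj hs₀ hs).1 hcs
  rw [hc, sq_eq_one.1 hc1, one_smul]

section Haar

variable {G : Type*} [Group G] [TopologicalSpace G] [IsTopologicalGroup G] [LocallyCompactSpace G]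
  [SecondCountableTopology G] [MeasurableSpace G] [BorelSpace G]
  (μ : Measure G) [μ.IsHaarMeasure] [μ.IsMulRightInvariant]

theorem measurePreserving_of_involutive_of_map_mul_rev (f : G ≃ₜ G) (hinv : Involutive f)
    (hmul : ∀ a b, f (a * b) = f b * f a) : MeasurePreserving f μ μ := by
  have : (μ.map f).IsMulLeftInvariant := ⟨fun a => by
    have : (a * ·) ∘ f = f ∘ (· * f a) := funext fun x => by simp [hmul, hinv a]
    rw [map_map (measurable_const_mul a) f.measurable, this,
      ← map_map f.measurable (measurable_mul_const _), map_mul_right_eq_self]⟩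
  have := IsFiniteMeasureOnCompacts.map μ f
  let K : TopologicalSpace.PositiveCompacts G := Classical.arbitrary _
  exact ⟨f.measurable, map_eq_self_of_involutive_of_eq_smul f.measurable hinv
    (isMulLeftInvariant_eq_smul _ μ) (measure_pos_of_nonempty_interior μ K.interior_nonempty).ne'
    K.isCompact.measure_lt_top.ne⟩

theorem isInvInvariant_of_isMulRightInvariant : μ.IsInvInvariant :=
  ⟨(measurePreserving_of_involutive_of_map_mul_rev μ (Homeomorph.inv G) inv_involutive
    mul_inv_rev).map_eq⟩

end Haar

end MeasureTheory.Measure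

section Convolution

variable {G : Type*} [Group G]

def IsBiinvariant {α : Type*} (K : Set G) (φ : G → α) : Prop :=
  ∀ k₁ k₂ g, k₁ ∈ K → k₂ ∈ K → φ (k₁ * g * k₂) = φ g

theorem IsBiinvariant.comp_eq {α : Type*} {K : Set G} {φ : G → α} (hφ : IsBiinvariant K φ)
    {θ : G → G} (hθ : ∀ g, ∃ k₁ ∈ K, ∃ k₂ ∈ K, θ g = k₁ * g * k₂) : φ ∘ θ = φ := by
  funext g
  obtain ⟨k₁, hk₁, k₂, hk₂, hg⟩ := hθ g
  rw [Function.comp_apply, hg, hφ k₁ k₂ g hk₁ hk₂]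

variable [MeasurableSpace G]

noncomputable def mulConvolution (μ : Measure G) (φ ψ : G → ℂ) (g : G) : ℂ :=
  ∫ h, φ (g * h⁻¹) * ψ h ∂μ

variable [MeasurableMul G] (μ : Measure G)

theorem IsBiinvariant.mulConvolution [μ.IsMulRightInvariant] {K : Set G} (hK : 1 ∈ K)
    {φ ψ : G → ℂ} (hφ : IsBiinvariant K φ) (hψ : IsBiinvariant K ψ) :
    IsBiinvariant K (mulConvolution μ φ ψ) := by
  intro k₁ k₂ g hk₁ hk₂
  simp only [_root_.mulConvolution]
  rw [← integral_mul_right_eq_self _ k₂]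
  refine integral_congr_ae (.of_forall fun h => ?_)
  dsimp only
  rw [show k₁ * g * k₂ * (h * k₂)⁻¹ = k₁ * (g * h⁻¹) * 1 by group, hφ k₁ 1 _ hk₁ hK,
    ← one_mul h, hψ 1 k₂ h hK hk₂, one_mul]

theorem mulConvolution_apply_of_map_mul_rev [MeasurableInv G] [μ.IsMulRightInvariant]
    [μ.IsInvInvariant] (θ : G ≃ᵐ G) (hθμ : MeasurePreserving θ μ μ)
    (hθ : ∀ a b, θ (a * b) = θ b * θ a) (φ ψ : G → ℂ) (g : G) :
    mulConvolution μ φ ψ (θ g) = mulConvolution μ (ψ ∘ θ) (φ ∘ θ) g := by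
  have hθinv : ∀ a, θ a⁻¹ = (θ a)⁻¹ := fun a =>
    congr_arg MulOpposite.unop (map_inv (MonoidHom.mk' (fun a => MulOpposite.op (θ a))
      fun a b => by rw [hθ, MulOpposite.op_mul]) a)
  calc mulConvolution μ φ ψ (θ g) = ∫ h, φ (θ g * (θ h)⁻¹) * ψ (θ h) ∂μ :=
        (hθμ.integral_comp' (fun h => φ (θ g * h⁻¹) * ψ h)).symm
    _ = ∫ h, ψ (θ (g * (h⁻¹ * g)⁻¹)) * φ (θ (h⁻¹ * g)) ∂μ := by
        simp only [← hθinv, ← hθ, mul_inv_rev, inv_inv, mul_inv_cancel_left, mul_comm (φ _)]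
    _ = mulConvolution μ (ψ ∘ θ) (φ ∘ θ) g := by
        rw [integral_inv_eq_self (fun h => ψ (θ (g * (h * g)⁻¹)) * φ (θ (h * g))),
          integral_mul_right_eq_self (fun h => ψ (θ (g * h⁻¹)) * φ (θ h))]
        rfl

theorem mulConvolution_comm_of_map_mul_rev [MeasurableInv G] [μ.IsMulRightInvariant]
    [μ.IsInvInvariant] {K : Set G} (hK : 1 ∈ K) (θ : G ≃ᵐ G) (hθμ : MeasurePreserving θ μ μ)
    (hθ : ∀ a b, θ (a * b) = θ b * θ a) (hθK : ∀ g, ∃ k₁ ∈ K, ∃ k₂ ∈ K, θ g = k₁ * g * k₂)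
    {φ ψ : G → ℂ} (hφ : IsBiinvariant K φ) (hψ : IsBiinvariant K ψ) :
    mulConvolution μ φ ψ = mulConvolution μ ψ φ := by
  funext g
  calc mulConvolution μ φ ψ g = mulConvolution μ φ ψ (θ g) :=
        (congr_fun ((hφ.mulConvolution μ hK hψ).comp_eq hθK) g).symm
    _ = mulConvolution μ ψ φ g := by
        rw [mulConvolution_apply_of_map_mul_rev μ θ hθμ hθ, hφ.comp_eq hθK, hψ.comp_eq hθK]

end Convolution

namespace Matrix

section Polar

variable {n 𝕜 : Type*} [Fintype n] [DecidableEq n] [RCLike 𝕜]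

open scoped MatrixOrder ComplexOrder in
theorem exists_mem_unitaryGroup_mul_isHermitian {A : Matrix n n 𝕜} (hA : IsUnit A) :
    ∃ U ∈ unitaryGroup n 𝕜, ∃ P : Matrix n n 𝕜, P.IsHermitian ∧ A = U * P := by
  obtain ⟨P, hPP, hP⟩ : ∃ P : Matrix n n 𝕜, P * P = Aᴴ * A ∧ P.IsHermitian :=
    ⟨CFC.sqrt (Aᴴ * A), CFC.sqrt_mul_sqrt_self _ (posSemidef_conjTranspose_mul_self A).nonneg,
      (nonneg_iff_posSemidef.1 (CFC.sqrt_nonneg _)).1⟩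
  obtain ⟨P, rfl⟩ : IsUnit P := isUnit_of_mul_isUnit_left (hPP ▸ hA.star.mul hA)
  refine ⟨A * (↑P⁻¹ : Matrix n n 𝕜), ?_, P, hP, by rw [mul_assoc, Units.inv_mul, mul_one]⟩
  rw [mem_unitaryGroup_iff', star_eq_conjTranspose]
  calc (A * ↑P⁻¹)ᴴ * (A * ↑P⁻¹) = (↑P⁻¹)ᴴ * (Aᴴ * A) * ↑P⁻¹ := by
        rw [conjTranspose_mul]; noncomm_ring
    _ = (↑P⁻¹)ᴴ * (P : Matrix n n 𝕜)ᴴ := by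
        rw [← hPP, mul_assoc, mul_assoc, Units.mul_inv, mul_one, hP.eq]
    _ = 1 := by rw [← conjTranspose_mul, Units.mul_inv, conjTranspose_one]

theorem exists_mem_unitaryGroup_conjTranspose_eq {A : Matrix n n 𝕜} (hA : IsUnit A) :
    ∃ U ∈ unitaryGroup n 𝕜, Aᴴ = U * A * U := by
  obtain ⟨V, hV, P, hP, rfl⟩ := exists_mem_unitaryGroup_mul_isHermitian hA
  refine ⟨Vᴴ, Unitary.star_mem hV, ?_⟩
  rw [conjTranspose_mul, hP.eq, ← mul_assoc, ← star_eq_conjTranspose,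
    Unitary.star_mul_self_of_mem hV, one_mul]

end Polar

namespace GeneralLinearGroup

variable {n R : Type*} [Fintype n] [DecidableEq n] [CommRing R]

def transpose (g : GL n R) : GL n R where
  val := (g : Matrix n n R)ᵀ
  inv := (↑g⁻¹ : Matrix n n R)ᵀ
  val_inv := by rw [← transpose_mul, g.inv_mul, transpose_one]
  inv_val := by rw [← transpose_mul, g.mul_inv, transpose_one]

theorem transpose_mul (a b : GL n R) : transpose (a * b) = transpose b * transpose a :=
  Units.ext (Matrix.transpose_mul _ _)

theorem transpose_involutive : Involutive (transpose : GL n R → GL n R) :=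
  fun _ => Units.ext (transpose_transpose _)

theorem continuous_transpose [TopologicalSpace R] :
    Continuous (transpose : GL n R → GL n R) :=
  Units.continuous_iff.2
    ⟨Units.continuous_val.matrix_transpose, Units.continuous_coe_inv.matrix_transpose⟩

def transposeHomeomorph [TopologicalSpace R] : GL n R ≃ₜ GL n R where
  toEquiv := transpose_involutive.toPerm _
  continuous_toFun := continuous_transpose
  continuous_invFun := continuous_transpose

theorem exists_mem_orthogonalGroup_transpose_eq (g : GL n ℝ) :
    ∃ k : GL n ℝ, (k : Matrix n n ℝ) ∈ orthogonalGroup n ℝ ∧ transpose g = k * g * k := by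
  obtain ⟨U, hU, h⟩ := exists_mem_unitaryGroup_conjTranspose_eq g.isUnit
  refine ⟨Unitary.toUnits ⟨U, hU⟩, hU, Units.ext ?_⟩
  rwa [conjTranspose_eq_transpose_of_trivial] at h

end GeneralLinearGroup

end Matrix

theorem hecke_algebra_commutative_general (n : ℕ)
    [MeasurableSpace (GL (Fin n) ℝ)] [BorelSpace (GL (Fin n) ℝ)]
    (μ : Measure (GL (Fin n) ℝ)) [μ.IsHaarMeasure] [μ.IsMulRightInvariant]
    (φ ψ : GL (Fin n) ℝ → ℂ)
    (hφK : ∀ k₁ k₂ g : GL (Fin n) ℝ,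
      (k₁ : Matrix (Fin n) (Fin n) ℝ) ∈ Matrix.orthogonalGroup (Fin n) ℝ →
      (k₂ : Matrix (Fin n) (Fin n) ℝ) ∈ Matrix.orthogonalGroup (Fin n) ℝ →
      φ (k₁ * g * k₂) = φ g)
    (hψK : ∀ k₁ k₂ g : GL (Fin n) ℝ,
      (k₁ : Matrix (Fin n) (Fin n) ℝ) ∈ Matrix.orthogonalGroup (Fin n) ℝ →
      (k₂ : Matrix (Fin n) (Fin n) ℝ) ∈ Matrix.orthogonalGroup (Fin n) ℝ →
      ψ (k₁ * g * k₂) = ψ g) :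
    ∀ g : GL (Fin n) ℝ,
      ∫ h, φ (g * h⁻¹) * ψ h ∂μ = ∫ h, ψ (g * h⁻¹) * φ h ∂μ := by
  open Matrix Matrix.GeneralLinearGroup in
  let K : Set (GL (Fin n) ℝ) := {k | (k : Matrix (Fin n) (Fin n) ℝ) ∈ orthogonalGroup (Fin n) ℝ}
  have := Measure.isInvInvariant_of_isMulRightInvariant μ
  have htr : MeasurePreserving transposeHomeomorph μ μ :=
    Measure.measurePreserving_of_involutive_of_map_mul_rev μ transposeHomeomorph
      transpose_involutive transpose_mul
  have htrK (g : GL (Fin n) ℝ) : ∃ k₁ ∈ K, ∃ k₂ ∈ K, transpose g = k₁ * g * k₂ :=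
    let ⟨k, hk, hg⟩ := exists_mem_orthogonalGroup_transpose_eq g
    ⟨k, hk, k, hk, hg⟩
  exact congr_fun (mulConvolution_comm_of_map_mul_rev μ (K := K)
    (one_mem (orthogonalGroup (Fin n) ℝ)) transposeHomeomorph.toMeasurableEquiv htr
    transpose_mul htrK hφK hψK)

/-- Gelfand's trick: convolution of continuous compactly supported `O(n)`-biinvariant
functions on `GL(n,ℝ)` (with respect to a bi-invariant Haar measure) is commutative. -/
theorem hecke_algebra_commutative (n : ℕ)
    [MeasurableSpace (GL (Fin n) ℝ)] [BorelSpace (GL (Fin n) ℝ)]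
    (μ : Measure (GL (Fin n) ℝ)) [μ.IsHaarMeasure] [μ.IsMulRightInvariant]
    (φ ψ : GL (Fin n) ℝ → ℂ)
    (hφc : Continuous φ) (hφs : HasCompactSupport φ)
    (hψc : Continuous ψ) (hψs : HasCompactSupport ψ)
    (hφK : ∀ k₁ k₂ g : GL (Fin n) ℝ,
      (k₁ : Matrix (Fin n) (Fin n) ℝ) ∈ Matrix.orthogonalGroup (Fin n) ℝ →
      (k₂ : Matrix (Fin n) (Fin n) ℝ) ∈ Matrix.orthogonalGroup (Fin n) ℝ →
      φ (k₁ * g * k₂) = φ g)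
    (hψK : ∀ k₁ k₂ g : GL (Fin n) ℝ,
      (k₁ : Matrix (Fin n) (Fin n) ℝ) ∈ Matrix.orthogonalGroup (Fin n) ℝ →
      (k₂ : Matrix (Fin n) (Fin n) ℝ) ∈ Matrix.orthogonalGroup (Fin n) ℝ →
      ψ (k₁ * g * k₂) = ψ g) :
    ∀ g : GL (Fin n) ℝ,
      ∫ h, φ (g * h⁻¹) * ψ h ∂μ = ∫ h, ψ (g * h⁻¹) * φ h ∂μ :=
  hecke_algebra_commutative_general n μ φ ψ hφK hψK
end
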